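/- The prime 2 does not split in the order ℤ[√−7]: there is no factorization of the ideal (2) in ℤ[√−7] as a product of two distinct invertible prime ideals. -/

import Mathlib

/-!
Statement 11: The prime 2 does not split in the order `ℤ[√−7]`: there is no factorization of
the ideal `(2)` in `ℤ[√−7]` as a product of two distinct invertible prime ideals.

An ideal `P` of a domain is invertible if there is an ideal `J` with `P·J` a nonzero
principal ideal.
-/

/-- An ideal is invertible if it times some ideal is a nonzero principal ideal. -/
def IsInvertibleIdeal {R : Type*} [CommRing R] (P : Ideal R) : Prop :=
  ∃ (J : Ideal R) (a : R), a ≠ 0 ∧ P * J = Ideal.span {a}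

/-- The ring hom `ℤ√-7 → ℤ/2` sending `a + b√-7` to `a + b`. -/
def fmod2 : ℤ√(-7) →+* ZMod 2 where
  toFun x := (x.re : ZMod 2) + (x.im : ZMod 2)
  map_one' := by simp
  map_zero' := by simp
  map_add' x y := by push_cast [Zsqrtd.re_add, Zsqrtd.im_add]; ring
  map_mul' x y := by
    push_cast [Zsqrtd.re_mul, Zsqrtd.im_mul]
    ring_nf
    simp only [show (7 : ZMod 2) = 1 from by decide, CharTwo.sub_eq_add]
    ring

lemma fmod2_surj : Function.Surjective fmod2 := by
  intro a
  fin_cases a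
  · exact ⟨0, by simp [fmod2]; rfl⟩
  · exact ⟨1, by simp [fmod2]; rfl⟩

lemma prime_eq_ker (P : Ideal (ℤ√(-7))) (hP : P.IsPrime)
    (h2 : (2 : ℤ√(-7)) ∈ P) : P = RingHom.ker fmod2 := by
  have hmax : (RingHom.ker fmod2).IsMaximal :=
    RingHom.ker_isMaximal_of_surjective _ fmod2_surj
  -- ω - 1 ∈ P
  have hω : (Zsqrtd.sqrtd - 1 : ℤ√(-7)) ∈ P := by
    have hprod : ((1 + Zsqrtd.sqrtd) * (Zsqrtd.sqrtd - 1) : ℤ√(-7)) = 2 * (-4) := by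
      ext <;> simp [Zsqrtd.sqrtd, Zsqrtd.re_mul, Zsqrtd.im_mul]
    have : ((1 + Zsqrtd.sqrtd) * (Zsqrtd.sqrtd - 1) : ℤ√(-7)) ∈ P := by
      rw [hprod]; exact Ideal.mul_mem_right _ _ h2
    rcases hP.mem_or_mem this with h | h
    · have : (Zsqrtd.sqrtd - 1 : ℤ√(-7)) = (1 + Zsqrtd.sqrtd) - 2 := by ring
      rw [this]; exact Ideal.sub_mem _ h h2
    · exact h
  have hle : RingHom.ker fmod2 ≤ P := by
    intro x hx
    have hx' : ((x.re + x.im : ℤ) : ZMod 2) = 0 := by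
      simpa [fmod2, RingHom.mem_ker] using hx
    obtain ⟨k, hk⟩ := (ZMod.intCast_zmod_eq_zero_iff_dvd _ 2).mp hx'
    have hxeq : x = ((x.re + x.im : ℤ) : ℤ√(-7)) + (x.im : ℤ√(-7)) * (Zsqrtd.sqrtd - 1) := by
      ext <;> simp [Zsqrtd.sqrtd]
    have hmem : ((x.re + x.im : ℤ) : ℤ√(-7)) ∈ P := by
      rw [hk]; push_cast; exact Ideal.mul_mem_right _ _ h2
    rw [hxeq]
    exact Ideal.add_mem _ hmem (Ideal.mul_mem_left _ _ hω)
  exact (hmax.eq_of_le hP.ne_top hle).symm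

theorem two_does_not_split_in_Zsqrt_neg_seven :
    ¬ ∃ P Q : Ideal (ℤ√(-7)), P ≠ Q ∧ P.IsPrime ∧ Q.IsPrime ∧
      IsInvertibleIdeal P ∧ IsInvertibleIdeal Q ∧
      P * Q = Ideal.span {(2 : ℤ√(-7))} := by
  rintro ⟨P, Q, hne, hP, hQ, -, -, hPQ⟩
  have h2 : (2 : ℤ√(-7)) ∈ P * Q := by rw [hPQ]; exact Ideal.subset_span rfl
  have h2P : (2 : ℤ√(-7)) ∈ P := Ideal.mul_le_left h2
  have h2Q : (2 : ℤ√(-7)) ∈ Q := Ideal.mul_le_right h2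
  exact hne ((prime_eq_ker P hP h2P).trans (prime_eq_ker Q hQ h2Q).symm)
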